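/- Let {M¹_L} →(ξ¹) {M²_L} →(ξ²) {M³_L} →(ξ³) {M⁴_L} be a sequence of controlled homomorphisms between inductive systems over ℝ≥0 that is asymptotically exact at {M²_L} and at {M³_L}. If ξ¹ is controlled equivalent to the zero homomorphism and there exists a controlled homomorphism s : {M⁴_L} → {M³_L} with ξ³∘s controlled equivalent to the identity, then there exists a controlled homomorphism p : {M³_L} → {M²_L} such that p∘ξ² is controlled equivalent to the identity. -/

import Mathlib

open scoped NNReal
open Filter

/-- An inductive system of abelian groups over `ℝ≥0`. -/
structure IndSys where
  M : ℝ≥0 → Type*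
  inst : ∀ L, AddCommGroup (M L)
  map : ∀ {L L' : ℝ≥0}, L ≤ L' → (M L →+ M L')
  map_refl : ∀ (L : ℝ≥0) (x : M L), map (le_refl L) x = x
  map_comp : ∀ {L L' L'' : ℝ≥0} (h : L ≤ L') (h' : L' ≤ L'') (x : M L),
    map h' (map h x) = map (h.trans h') x

attribute [instance] IndSys.inst

/-- A control function: non-decreasing and tending to infinity. -/
def IsControl (F : ℝ≥0 → ℝ≥0) : Prop := Monotone F ∧ Tendsto F atTop atTop

/-- A controlled homomorphism between inductive systems, with control function `F`. -/
structure CtrlHom (M N : IndSys) (F : ℝ≥0 → ℝ≥0) where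
  ctrl : IsControl F
  f : ∀ L, M.M L →+ N.M (F L)
  compat : ∀ {L L' : ℝ≥0} (h : L ≤ L') (x : M.M L),
    N.map (ctrl.1 h) (f L x) = f L' (M.map h x)

/-- The identity controlled homomorphism, with control function `L ↦ L`. -/
def CtrlHom.id (M : IndSys) : CtrlHom M M (fun L => L) where
  ctrl := ⟨monotone_id, tendsto_id⟩
  f L := AddMonoidHom.id _
  compat _ _ := rfl

/-- The zero controlled homomorphism, with control function `L ↦ L`. -/
def CtrlHom.zero (M N : IndSys) : CtrlHom M N (fun L => L) where
  ctrl := ⟨monotone_id, tendsto_id⟩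
  f _ := 0
  compat _ _ := by simp

/-- Composition of controlled homomorphisms: `(ξ ∘ η)_L = ξ_{G(L)} ∘ η_L`, control `F ∘ G`. -/
def CtrlHom.comp {M N P : IndSys} {F G : ℝ≥0 → ℝ≥0}
    (ξ : CtrlHom N P F) (η : CtrlHom M N G) : CtrlHom M P (fun L => F (G L)) where
  ctrl := ⟨ξ.ctrl.1.comp η.ctrl.1, ξ.ctrl.2.comp η.ctrl.2⟩
  f L := (ξ.f (G L)).comp (η.f L)
  compat h x := by
    simp only [AddMonoidHom.comp_apply]
    rw [ξ.compat (η.ctrl.1 h), η.compat h]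

/-- `ξ` is controlled equivalent to `η` (for some control function `H ≥ F, G`). -/
def CtrlEquiv {M N : IndSys} {F G : ℝ≥0 → ℝ≥0} (ξ : CtrlHom M N F) (η : CtrlHom M N G) :
    Prop :=
  ∃ H : ℝ≥0 → ℝ≥0, IsControl H ∧
    ∃ (hF : ∀ L, F L ≤ H L) (hG : ∀ L, G L ≤ H L),
      ∀ (L : ℝ≥0) (x : M.M L), N.map (hF L) (ξ.f L x) = N.map (hG L) (η.f L x)

/-- `ξ` is controlled equivalent to the zero homomorphism. -/
def CtrlEquivZero {M N : IndSys} {F : ℝ≥0 → ℝ≥0} (ξ : CtrlHom M N F) : Prop :=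
  CtrlEquiv ξ (CtrlHom.zero M N)

/-- `ξ` is controlled equivalent to the identity homomorphism. -/
def CtrlEquivId {M : IndSys} {F : ℝ≥0 → ℝ≥0} (ξ : CtrlHom M M F) : Prop :=
  CtrlEquiv ξ (CtrlHom.id M)

/-- The sequence `M →(ξ) N →(η) P` is asymptotically exact at `N` with control functions
`F₁, F₂`. -/
def AsympExactAt {M N P : IndSys} {F G : ℝ≥0 → ℝ≥0}
    (ξ : CtrlHom M N F) (η : CtrlHom N P G) (F₁ F₂ : ℝ≥0 → ℝ≥0) : Prop :=
  (IsControl F₁ ∧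
    ∃ (h₁ : ∀ L, G (F L) ≤ F₁ L) (_h₂ : ∀ L, L ≤ F₁ L),
      ∀ (L : ℝ≥0) (x : M.M L), P.map (h₁ L) (η.f (F L) (ξ.f L x)) = 0) ∧
  (IsControl F₂ ∧
    ∃ hle : ∀ L, L ≤ F (F₂ L),
      ∀ (L : ℝ≥0) (m' : N.M L), η.f L m' = 0 →
        ∃ m : M.M (F₂ L), ξ.f (F₂ L) m = N.map (hle L) m')

/-- An inductive system is uniformly controlled with uniform control pair `(L₀, F)`. -/
def UnifCtrlPair (M : IndSys) (L₀ : ℝ≥0) (F : ℝ≥0 → ℝ≥0) : Prop :=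
  IsControl F ∧
  ∃ hle : ∀ L, L ≤ F L,
    (∀ L : ℝ≥0, L₀ ≤ L → ∀ (L' : ℝ≥0) (x : M.M L'),
      ∃ (y : M.M L) (L'' : ℝ≥0) (h : L ≤ L'') (h' : L' ≤ L''), M.map h y = M.map h' x) ∧
    (∀ (L : ℝ≥0) (x : M.M L), (∃ (L' : ℝ≥0) (h : L ≤ L'), M.map h x = 0) →
      M.map (hle L) x = 0)

/-- An inductive system is uniformly controlled. -/
def UnifCtrl (M : IndSys) : Prop := ∃ (L₀ : ℝ≥0) (F : ℝ≥0 → ℝ≥0), UnifCtrlPair M L₀ F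

/-!
Exactness at `M₂` together with `ξ₁ ∼ 0` makes `ξ₂` asymptotically injective: an element
killed by `ξ₂` comes, up to control, from `M₁`, where `ξ₁` kills it. For `x ∈ M₃` the element
`x - s ξ₃ x` is asymptotically killed by `ξ₃` because `ξ₃ s ∼ id`, so by exactness at `M₃` it
lifts along `ξ₂`. Asymptotic injectivity makes the lift additive and compatible up to control,
which defines `p` with `ξ₂ p ∼ id - s ξ₃`. Since `ξ₃ ξ₂ ∼ 0`, this gives `ξ₂ p ξ₂ ∼ ξ₂`, and
cancelling the asymptotically injective `ξ₂` gives `p ξ₂ ∼ id`.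
-/

theorem isControl_id : IsControl (fun L => L) := ⟨monotone_id, tendsto_id⟩

namespace IsControl

variable {F G : ℝ≥0 → ℝ≥0}

theorem comp (hF : IsControl F) (hG : IsControl G) : IsControl (fun L => F (G L)) :=
  ⟨hF.1.comp hG.1, hF.2.comp hG.2⟩

theorem exists_le_comp (hF : IsControl F) : ∃ C, IsControl C ∧ ∀ L, L ≤ F (C L) := by
  have hne : ∀ L, {a | L ≤ F a}.Nonempty := fun L => (hF.2.eventually_ge_atTop L).exists
  -- `+ 1` because the infimum need not be attained
  refine ⟨fun L => max L (sInf {a | L ≤ F a} + 1),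
    ⟨fun a b hab => max_le_max hab (add_le_add_left ?_ 1),
      tendsto_atTop_mono (fun _ => le_max_left _ _) tendsto_id⟩, fun L => ?_⟩
  · exact csInf_le_csInf (OrderBot.bddBelow _) (hne b) fun x hx => hab.trans hx
  · obtain ⟨a, ha, hlt⟩ := exists_lt_of_csInf_lt (hne L) (lt_add_of_pos_right _ one_pos)
    exact ha.trans (hF.1 (hlt.le.trans (le_max_right _ _)))

theorem max (hF : IsControl F) (hG : IsControl G) : IsControl (fun L => max (F L) (G L)) :=
  ⟨hF.1.sup hG.1, tendsto_atTop_mono (fun _ => le_max_left _ _) hF.2⟩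

end IsControl

namespace CtrlHom

variable {M N : IndSys} {F G : ℝ≥0 → ℝ≥0}

def raise (ξ : CtrlHom M N F) (hG : IsControl G) (hFG : ∀ L, F L ≤ G L) : CtrlHom M N G where
  ctrl := hG
  f L := (N.map (hFG L)).comp (ξ.f L)
  compat h x := by
    simp only [AddMonoidHom.comp_apply]
    rw [← ξ.compat h, N.map_comp, N.map_comp]

instance : Sub (CtrlHom M N F) where
  sub ξ η :=
    { ctrl := ξ.ctrl
      f := fun L => ξ.f L - η.f L
      compat := fun h x => by
        simp only [AddMonoidHom.sub_apply, map_sub, ξ.compat h, η.compat h] }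

theorem sub_f_apply (ξ η : CtrlHom M N F) (L : ℝ≥0) (x : M.M L) :
    (ξ - η).f L x = ξ.f L x - η.f L x := rfl

end CtrlHom

namespace CtrlEquiv

variable {M N P : IndSys} {F : ℝ≥0 → ℝ≥0}

theorem trans {Fα Fβ Fγ : ℝ≥0 → ℝ≥0} {α : CtrlHom M N Fα}
    {β : CtrlHom M N Fβ} {γ : CtrlHom M N Fγ} (h₁ : CtrlEquiv α β) (h₂ : CtrlEquiv β γ) :
    CtrlEquiv α γ := by
  obtain ⟨H₁, hH₁, hα, hβ, e₁⟩ := h₁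
  obtain ⟨H₂, hH₂, hβ', hγ, e₂⟩ := h₂
  refine ⟨fun L => max (H₁ L) (H₂ L), hH₁.max hH₂, fun L => (hα L).trans (le_max_left _ _),
    fun L => (hγ L).trans (le_max_right _ _), fun L x => ?_⟩
  calc N.map _ (α.f L x) = N.map (le_max_left _ _) (N.map (hα L) (α.f L x)) :=
        (N.map_comp _ _ _).symm
    _ = N.map (le_max_left _ _) (N.map (hβ L) (β.f L x)) := by rw [e₁]
    _ = N.map (le_max_right _ _) (N.map (hβ' L) (β.f L x)) := by rw [N.map_comp, N.map_comp]
    _ = N.map (le_max_right _ _) (N.map (hγ L) (γ.f L x)) := by rw [e₂]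
    _ = N.map _ (γ.f L x) := N.map_comp _ _ _

theorem comp_right {Fα Fβ : ℝ≥0 → ℝ≥0} {α : CtrlHom N P Fα}
    {β : CtrlHom N P Fβ} (h : CtrlEquiv α β) (γ : CtrlHom M N F) :
    CtrlEquiv (α.comp γ) (β.comp γ) := by
  obtain ⟨H, hH, hα, hβ, e⟩ := h
  exact ⟨fun L => H (F L), hH.comp γ.ctrl, fun L => hα _, fun L => hβ _, fun L x => e _ _⟩

end CtrlEquiv

namespace CtrlHom

variable {M N P : IndSys} {G A : ℝ≥0 → ℝ≥0}

structure AsympInjective (η : CtrlHom N P G) (J : ℝ≥0 → ℝ≥0) : Prop where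
  ctrl : IsControl J
  le : ∀ L, L ≤ J L
  map_eq_zero : ∀ L (x : N.M L), η.f L x = 0 → N.map (le L) x = 0

namespace AsympInjective

variable {η : CtrlHom N P G} {J : ℝ≥0 → ℝ≥0}

theorem map_eq_map (hη : η.AsympInjective J) {L : ℝ≥0} {a b : N.M L}
    (hab : η.f L a = η.f L b) : N.map (hη.le L) a = N.map (hη.le L) b := by
  rw [← sub_eq_zero, ← map_sub]
  exact hη.map_eq_zero L _ (by rw [map_sub, hab, sub_self])

theorem ctrlEquiv_of_comp (hη : η.AsympInjective J) {Fα Fβ : ℝ≥0 → ℝ≥0}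
    {α : CtrlHom M N Fα} {β : CtrlHom M N Fβ} (h : CtrlEquiv (η.comp α) (η.comp β)) :
    CtrlEquiv α β := by
  obtain ⟨H, hH, hα, hβ, e⟩ := h
  obtain ⟨C, hC, hGC⟩ := η.ctrl.exists_le_comp
  set B : ℝ≥0 → ℝ≥0 := fun L => max (max (Fα L) (Fβ L)) (C (H L))
  have hαB : ∀ L, Fα L ≤ B L := fun L => (le_max_left _ _).trans (le_max_left _ _)
  have hβB : ∀ L, Fβ L ≤ B L := fun L => (le_max_right _ _).trans (le_max_left _ _)
  have hHB : ∀ L, H L ≤ G (B L) := fun L => (hGC _).trans (η.ctrl.1 (le_max_right _ _))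
  refine ⟨fun L => J (B L), hη.ctrl.comp ((α.ctrl.max β.ctrl).max (hC.comp hH)),
    fun L => (hαB L).trans (hη.le _), fun L => (hβB L).trans (hη.le _), fun L x => ?_⟩
  have key : η.f (B L) (N.map (hαB L) (α.f L x)) = η.f (B L) (N.map (hβB L) (β.f L x)) := by
    rw [← η.compat, ← η.compat, ← P.map_comp (hα L) (hHB L), ← P.map_comp (hβ L) (hHB L)]
    exact congrArg _ (e L x)
  have := hη.map_eq_map key
  rwa [N.map_comp, N.map_comp] at this

theorem exists_ctrlEquiv_comp (hη : η.AsympInjective J) (φ : CtrlHom M P A)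
    {K : ℝ≥0 → ℝ≥0} (hK : IsControl K) (hle : ∀ L, A L ≤ G (K L))
    (hlift : ∀ L (x : M.M L), ∃ m : N.M (K L), η.f (K L) m = P.map (hle L) (φ.f L x)) :
    ∃ (Fp : ℝ≥0 → ℝ≥0) (p : CtrlHom M N Fp), CtrlEquiv (η.comp p) φ := by
  choose lift hlift using hlift
  have lift_add : ∀ L (x y : M.M L), N.map (hη.le (K L)) (lift L (x + y)) =
      N.map (hη.le (K L)) (lift L x) + N.map (hη.le (K L)) (lift L y) := by
    intro L x y
    rw [← map_add]
    exact hη.map_eq_map (by rw [map_add, hlift, hlift, hlift, map_add, map_add])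
  let p : CtrlHom M N (fun L => J (K L)) :=
    { ctrl := hη.ctrl.comp hK
      f := fun L => AddMonoidHom.mk' (fun x => N.map (hη.le (K L)) (lift L x)) (lift_add L)
      compat := fun {L L'} h x => by
        have := hη.map_eq_map (a := N.map (hK.1 h) (lift L x)) (b := lift L' (M.map h x))
          (by rw [← η.compat, hlift, hlift, ← φ.compat, P.map_comp, P.map_comp])
        rw [N.map_comp] at this
        simp only [AddMonoidHom.mk'_apply]
        rw [N.map_comp]
        exact this }
  refine ⟨_, p, fun L => G (J (K L)), η.ctrl.comp p.ctrl, fun L => le_rfl,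
    fun L => (hle L).trans (η.ctrl.1 (hη.le _)), fun L x => ?_⟩
  show P.map _ (η.f _ (N.map _ (lift L x))) = _
  rw [P.map_refl, ← η.compat, hlift, P.map_comp]

end AsympInjective

end CtrlHom

section AsympExactAt

variable {M N P Q : IndSys} {F G A E E' : ℝ≥0 → ℝ≥0} {ξ : CtrlHom M N F} {η : CtrlHom N P G}

theorem AsympExactAt.ctrlEquivZero_comp (hex : AsympExactAt ξ η E E') :
    CtrlEquivZero (η.comp ξ) := by
  obtain ⟨⟨hE, h₁, h₂, van⟩, -⟩ := hex
  exact ⟨E, hE, h₁, h₂, fun L x => (van L x).trans (map_zero _).symm⟩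

theorem AsympExactAt.asympInjective (hex : AsympExactAt ξ η E E') (hξ : CtrlEquivZero ξ) :
    ∃ J, η.AsympInjective J := by
  obtain ⟨-, hE', hle, surj⟩ := hex
  obtain ⟨H, hH, hF, _, e⟩ := hξ
  refine ⟨fun L => H (E' L), ⟨hH.comp hE', fun L => (hle L).trans (hF _), fun L x hx => ?_⟩⟩
  obtain ⟨m, hm⟩ := surj L x hx
  rw [← N.map_comp (hle L) (hF _), ← hm, e]
  exact map_zero _

theorem AsympExactAt.exists_lift (hex : AsympExactAt ξ η E E') (φ : CtrlHom Q N A)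
    (hφ : CtrlEquivZero (η.comp φ)) :
    ∃ K, IsControl K ∧ ∃ hle : ∀ L, A L ≤ F (K L),
      ∀ L (x : Q.M L), ∃ m : M.M (K L), ξ.f (K L) m = N.map (hle L) (φ.f L x) := by
  obtain ⟨-, hE', hE'le, surj⟩ := hex
  obtain ⟨H, hH, hηφ, _, e⟩ := hφ
  obtain ⟨C, hC, hGC⟩ := η.ctrl.exists_le_comp
  set B : ℝ≥0 → ℝ≥0 := fun L => max (A L) (C (H L))
  have hAB : ∀ L, A L ≤ B L := fun L => le_max_left _ _
  have hHB : ∀ L, H L ≤ G (B L) := fun L => (hGC _).trans (η.ctrl.1 (le_max_right _ _))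
  refine ⟨fun L => E' (B L), hE'.comp (φ.ctrl.max (hC.comp hH)),
    fun L => (hAB L).trans (hE'le _), fun L x => ?_⟩
  have hvan : η.f (B L) (N.map (hAB L) (φ.f L x)) = 0 := by
    rw [← η.compat, ← P.map_comp (hηφ L) (hHB L)]
    exact (congrArg _ ((e L x).trans (map_zero _))).trans (map_zero _)
  obtain ⟨m, hm⟩ := surj (B L) _ hvan
  exact ⟨m, hm.trans (N.map_comp _ _ _)⟩

end AsympExactAt

namespace CtrlHom

variable {M N P : IndSys} {F G Fs : ℝ≥0 → ℝ≥0}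

def idSubComp (s : CtrlHom P N Fs) (ζ : CtrlHom N P G) :
    CtrlHom N N (fun L => max L (Fs (G L))) :=
  (CtrlHom.id N).raise (isControl_id.max (s.comp ζ).ctrl) (fun _ => le_max_left _ _) -
    (s.comp ζ).raise (isControl_id.max (s.comp ζ).ctrl) (fun _ => le_max_right _ _)

theorem idSubComp_f_apply (s : CtrlHom P N Fs) (ζ : CtrlHom N P G) (L : ℝ≥0) (x : N.M L) :
    (idSubComp s ζ).f L x =
      N.map (le_max_left _ _) x - N.map (le_max_right _ _) (s.f (G L) (ζ.f L x)) := rfl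

variable {s : CtrlHom P N Fs} {ζ : CtrlHom N P G}

theorem ctrlEquivZero_comp_idSubComp (hs : CtrlEquivId (ζ.comp s)) :
    CtrlEquivZero (ζ.comp (idSubComp s ζ)) := by
  obtain ⟨Hs, hHs, hζs, hid, e⟩ := hs
  refine ⟨fun L => max (max L (G (max L (Fs (G L))))) (Hs (G L)),
    (isControl_id.max (ζ.ctrl.comp (idSubComp s ζ).ctrl)).max (hHs.comp ζ.ctrl),
    fun L => (le_max_right _ _).trans (le_max_left _ _),
    fun L => (le_max_left _ _).trans (le_max_left _ _), fun L x => ?_⟩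
  have hHs_le : Hs (G L) ≤ max (max L (G (max L (Fs (G L))))) (Hs (G L)) := le_max_right _ _
  show P.map _ (ζ.f _ ((idSubComp s ζ).f L x)) = P.map _ 0
  rw [idSubComp_f_apply, map_sub, ← ζ.compat, ← ζ.compat, map_sub, P.map_comp, P.map_comp,
    map_zero, sub_eq_zero, ← P.map_comp (hid (G L)) hHs_le, ← P.map_comp (hζs (G L)) hHs_le]
  exact congrArg _ (e _ _).symm

theorem ctrlEquiv_idSubComp_comp {η : CtrlHom M N F} (hζη : CtrlEquivZero (ζ.comp η)) :
    CtrlEquiv ((idSubComp s ζ).comp η) η := by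
  obtain ⟨H, hH, hF, hG, e⟩ := hζη
  refine ⟨fun L => max (max (F L) (Fs (G (F L)))) (Fs (H L)),
    ((idSubComp s ζ).ctrl.comp η.ctrl).max (s.ctrl.comp hH), fun L => le_max_left _ _,
    fun L => (le_max_left _ _).trans (le_max_left _ _), fun L x => ?_⟩
  have hζη : P.map (hF L) (ζ.f (F L) (η.f L x)) = 0 := (e L x).trans (map_zero _)
  have hvan : N.map (s.ctrl.1 (hF L)) (s.f (G (F L)) (ζ.f (F L) (η.f L x))) = 0 := by
    rw [s.compat (hF L), hζη, map_zero]
  show N.map _ ((idSubComp s ζ).f (F L) (η.f L x)) = _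
  rw [idSubComp_f_apply, map_sub, N.map_comp, N.map_comp,
    ← N.map_comp (s.ctrl.1 (hF L)) (le_max_right _ _), hvan, map_zero, sub_zero]

end CtrlHom

theorem exists_ctrlEquivId_comp_of_asympInjective {M N P : IndSys} {F G E E' J Fs : ℝ≥0 → ℝ≥0}
    {η : CtrlHom M N F} {ζ : CtrlHom N P G} (hη : η.AsympInjective J)
    (hex : AsympExactAt η ζ E E') (s : CtrlHom P N Fs) (hs : CtrlEquivId (ζ.comp s)) :
    ∃ (Fp : ℝ≥0 → ℝ≥0) (p : CtrlHom N M Fp), CtrlEquivId (p.comp η) := by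
  obtain ⟨K, hK, hle, hlift⟩ :=
    hex.exists_lift (CtrlHom.idSubComp s ζ) (CtrlHom.ctrlEquivZero_comp_idSubComp hs)
  obtain ⟨Fp, p, hp⟩ := hη.exists_ctrlEquiv_comp _ hK hle hlift
  exact ⟨Fp, p, hη.ctrlEquiv_of_comp
    ((hp.comp_right η).trans (CtrlHom.ctrlEquiv_idSubComp_comp hex.ctrlEquivZero_comp))⟩

/-- a controlled splitting lemma. -/
theorem stmt14 (M₁ M₂ M₃ M₄ : IndSys) (F₁ F₂ F₃ : ℝ≥0 → ℝ≥0)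
    (ξ₁ : CtrlHom M₁ M₂ F₁) (ξ₂ : CtrlHom M₂ M₃ F₂) (ξ₃ : CtrlHom M₃ M₄ F₃)
    (hex₂ : ∃ E E' : ℝ≥0 → ℝ≥0, AsympExactAt ξ₁ ξ₂ E E')
    (hex₃ : ∃ E E' : ℝ≥0 → ℝ≥0, AsympExactAt ξ₂ ξ₃ E E')
    (hzero : CtrlEquivZero ξ₁)
    (hsplit : ∃ (Fs : ℝ≥0 → ℝ≥0) (s : CtrlHom M₄ M₃ Fs), CtrlEquivId (ξ₃.comp s)) :
    ∃ (Fp : ℝ≥0 → ℝ≥0) (p : CtrlHom M₃ M₂ Fp), CtrlEquivId (p.comp ξ₂) := by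
  obtain ⟨_, _, hex₂⟩ := hex₂
  obtain ⟨_, _, hex₃⟩ := hex₃
  obtain ⟨J, hJ⟩ := hex₂.asympInjective hzero
  obtain ⟨Fs, s, hs⟩ := hsplit
  exact exists_ctrlEquivId_comp_of_asympInjective hJ hex₃ s hs
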